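/- arXiv:math/0703500 — 6 statements merged into one kernel-verified Lean document; each statement's English description precedes it below -/
import Mathlib

section
/- There is a constant C > 0 such that for every λ > 0, every t ≥ 0 and every z ≥ 0, the double integral ∫₀^z ∫₀^t e^{−√(λ z' t')} dt' dz' is at most (C/λ)·ln(1 + λ z t). -/
/-!
The inner integral `∫₀^t e^{-√(c s)} ds`, with `c = λ z'`, is at most `t` because the integrand
is at most `1`, and at most `2 / c` by the explicit primitive `-(2/c) e^{-√(c s)} (1 + √(c s))`.
Combining the two, it is at most `4t / (2 + c t) = (4/λ) · b / (1 + b z')` with `b = λ t / 2`,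
and integrating this in `z'` gives `(4/λ) log (1 + λ z t / 2)`.
-/

open Real intervalIntegral MeasureTheory

lemma hasDerivAt_neg_two_mul_exp_neg_sqrt_mul {c s : ℝ} (hcs : 0 < c * s) :
    HasDerivAt (fun u => -2 * (exp (-√(c * u)) * (1 + √(c * u))))
      (c * exp (-√(c * s))) s := by
  have hsqrt : HasDerivAt (fun u => √(c * u)) (1 / (2 * √(c * s)) * c) s :=
    (hasDerivAt_sqrt hcs.ne').comp s (by simpa using (hasDerivAt_id s).const_mul c)
  have hprod := (((hasDerivAt_exp _).comp s hsqrt.neg).mul (hsqrt.const_add 1)).const_mul (-2)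
  refine hprod.congr_deriv ?_
  have : √(c * s) ≠ 0 := by positivity
  simp only [Function.comp_apply, Pi.neg_apply]
  field_simp
  ring

lemma integral_exp_neg_sqrt_mul_le_self (c : ℝ) {t : ℝ} (ht : 0 ≤ t) :
    ∫ s in (0 : ℝ)..t, exp (-√(c * s)) ≤ t := by
  calc ∫ s in (0 : ℝ)..t, exp (-√(c * s))
      ≤ ∫ _ in (0 : ℝ)..t, (1 : ℝ) :=
        integral_mono_on ht (Continuous.intervalIntegrable (by fun_prop) _ _)
          intervalIntegrable_const fun s _ => exp_le_one_iff.2 (neg_nonpos.2 (sqrt_nonneg _))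
    _ = t := by simp

lemma mul_integral_exp_neg_sqrt_mul_le_two {c t : ℝ} (hc : 0 ≤ c) (ht : 0 ≤ t) :
    c * ∫ s in (0 : ℝ)..t, exp (-√(c * s)) ≤ 2 := by
  rcases hc.eq_or_lt with rfl | hc
  · simp
  rw [← intervalIntegral.integral_const_mul, integral_eq_sub_of_hasDeriv_right_of_le ht
    (by fun_prop) (fun s hs => (hasDerivAt_neg_two_mul_exp_neg_sqrt_mul
      (mul_pos hc hs.1)).hasDerivWithinAt) (Continuous.intervalIntegrable (by fun_prop) _ _)]
  have : 0 ≤ exp (-√(c * t)) * (1 + √(c * t)) := by positivity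
  simp only [mul_zero, sqrt_zero, neg_zero, exp_zero, add_zero, mul_one]
  linarith

-- `F ≤ t` and `c F ≤ 2` give `(2 + c t) F = 2 F + t (c F) ≤ 4 t`, also when `c = 0`.
lemma integral_exp_neg_sqrt_mul_le {c t : ℝ} (hc : 0 ≤ c) (ht : 0 ≤ t) :
    ∫ s in (0 : ℝ)..t, exp (-√(c * s)) ≤ 4 * t / (2 + c * t) := by
  rw [le_div_iff₀ (by positivity)]
  nlinarith [integral_exp_neg_sqrt_mul_le_self c ht, mul_integral_exp_neg_sqrt_mul_le_two hc ht]

lemma one_add_mul_pos_of_mem_uIcc {b z u : ℝ} (hb : 0 ≤ b) (hz : 0 ≤ z)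
    (hu : u ∈ Set.uIcc 0 z) : 0 < 1 + b * u := by
  rw [Set.uIcc_of_le hz] at hu
  nlinarith [hu.1]

lemma intervalIntegrable_div_one_add_mul {b z : ℝ} (hb : 0 ≤ b) (hz : 0 ≤ z) :
    IntervalIntegrable (fun u => b / (1 + b * u)) volume 0 z :=
  (continuousOn_const.div (by fun_prop) fun u hu =>
    (one_add_mul_pos_of_mem_uIcc hb hz hu).ne').intervalIntegrable

lemma integral_div_one_add_mul {b z : ℝ} (hb : 0 ≤ b) (hz : 0 ≤ z) :
    ∫ u in (0 : ℝ)..z, b / (1 + b * u) = log (1 + b * z) := by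
  rw [integral_eq_sub_of_hasDerivAt (f := fun u => log (1 + b * u)) (fun u hu => ?_)
    (intervalIntegrable_div_one_add_mul hb hz)]
  · simp
  simpa [div_eq_inv_mul] using (((hasDerivAt_id u).const_mul b).const_add 1).log
    (one_add_mul_pos_of_mem_uIcc hb hz hu).ne'

/-- There is a constant `C > 0` such that for every `λ > 0`, every `t ≥ 0` and every `z ≥ 0`,
the double integral `∫₀^z ∫₀^t e^{−√(λ z' t')} dt' dz'` is at most `(C/λ)·ln(1 + λ z t)`. -/
theorem zakharov_kernel_integral_log_bound :
    ∃ C : ℝ, 0 < C ∧ ∀ lam t z : ℝ, 0 < lam → 0 ≤ t → 0 ≤ z →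
      (∫ z' in (0:ℝ)..z, ∫ t' in (0:ℝ)..t, Real.exp (-Real.sqrt (lam * z' * t')))
        ≤ (C / lam) * Real.log (1 + lam * z * t) := by
  refine ⟨4, by norm_num, fun lam t z hlam ht hz => ?_⟩
  have hinner : Continuous fun u => ∫ s in (0 : ℝ)..t, exp (-√(lam * u * s)) :=
    continuous_parametric_intervalIntegral_of_continuous' (by fun_prop) 0 t
  have hb : 0 ≤ lam * t / 2 := by positivity
  calc ∫ u in (0 : ℝ)..z, ∫ s in (0 : ℝ)..t, exp (-√(lam * u * s))
      ≤ ∫ u in (0 : ℝ)..z, 4 / lam * (lam * t / 2 / (1 + lam * t / 2 * u)) := by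
        refine integral_mono_on hz (hinner.intervalIntegrable _ _)
          ((intervalIntegrable_div_one_add_mul hb hz).const_mul _) fun u hu => ?_
        calc _ ≤ 4 * t / (2 + lam * u * t) :=
              integral_exp_neg_sqrt_mul_le (mul_nonneg hlam.le hu.1) ht
          _ = _ := by field_simp
    _ = 4 / lam * log (1 + lam * t / 2 * z) := by
        rw [intervalIntegral.integral_const_mul, integral_div_one_add_mul hb hz]
    _ ≤ 4 / lam * log (1 + lam * z * t) := by
        have : 0 ≤ lam * t * z := by positivity
        gcongr 4 / lam * log ?_
        linarith
end

section
/- Let Ē ∈ ℝ and let k ≥ max{1, 4Ē²} be real. For ζ ∈ ℂ \ {±k} set a(ζ) = k²Ē²/(ζ² − k²), and define λ(w) = (k² + 2a(k+w))^{1/2} using the principal branch of the complex square root. Then the map w ↦ λ(w) is complex-differentiable at every complex point w with 1 ≤ |w| ≤ k/2 (in particular, for such w the complex number k² + 2a(k+w) does not lie on the closed negative real axis). -/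
/-!
Writing `(k + w)² − k² = w (w + 2k)`, the bounds `1 ≤ |w| ≤ k/2` give `|(k + w)² − k²| ≥ 3k/2`,
so `|2a(k + w)| ≤ 4kĒ²/3 ≤ k²/3 < k²`. Hence `k² + 2a(k + w)` has positive real part, lies in the
slit plane, and the principal square root is holomorphic there.
-/

open Complex

lemma Complex.ofReal_add_mem_slitPlane {r : ℝ} {z : ℂ} (hz : ‖z‖ < r) :
    (r : ℂ) + z ∈ slitPlane := by
  have hre := (abs_le.mp (abs_re_le_norm z)).1
  exact Or.inl (by simp only [add_re, ofReal_re]; linarith)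

lemma mul_two_mul_abs_sub_norm_le_norm_add_sq_sub_sq (c : ℝ) (w : ℂ) :
    ‖w‖ * (2 * |c| - ‖w‖) ≤ ‖((c : ℂ) + w) ^ 2 - (c : ℂ) ^ 2‖ := by
  have hfactor : ((c : ℂ) + w) ^ 2 - (c : ℂ) ^ 2 = w * (w + 2 * c) := by ring
  have hnorm : 2 * |c| - ‖w‖ ≤ ‖w + 2 * (c : ℂ)‖ := by
    have h := norm_sub_norm_le (2 * (c : ℂ)) (-w)
    rw [norm_neg, sub_neg_eq_add, add_comm, norm_mul, norm_real, Real.norm_eq_abs] at h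
    norm_num at h
    linarith
  rw [hfactor, norm_mul]
  exact mul_le_mul_of_nonneg_left hnorm (norm_nonneg w)

lemma three_mul_div_two_le_norm_add_sq_sub_sq {k : ℝ} {w : ℂ} (hw1 : 1 ≤ ‖w‖)
    (hw2 : ‖w‖ ≤ k / 2) : 3 * k / 2 ≤ ‖((k : ℂ) + w) ^ 2 - (k : ℂ) ^ 2‖ := by
  have h := mul_two_mul_abs_sub_norm_le_norm_add_sq_sub_sq k w
  rw [abs_of_pos (by linarith)] at h
  nlinarith

lemma norm_two_mul_div_add_sq_sub_sq_lt {E k : ℝ} {w : ℂ} (hkE : 4 * E ^ 2 ≤ k)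
    (hw1 : 1 ≤ ‖w‖) (hw2 : ‖w‖ ≤ k / 2) :
    ‖2 * ((k : ℂ) ^ 2 * (E : ℂ) ^ 2 / (((k : ℂ) + w) ^ 2 - (k : ℂ) ^ 2))‖ < k ^ 2 := by
  have hk : 0 < k := by linarith
  have hden := three_mul_div_two_le_norm_add_sq_sub_sq hw1 hw2
  have hnum : ‖2 * ((k : ℂ) ^ 2 * (E : ℂ) ^ 2)‖ = 2 * (k ^ 2 * E ^ 2) := by
    simp [norm_real, abs_of_pos hk, sq_abs]
  rw [mul_div_assoc', norm_div, hnum, div_lt_iff₀ (by linarith)]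
  nlinarith [mul_le_mul_of_nonneg_left hden (sq_nonneg k),
    mul_le_mul_of_nonneg_left hkE (sq_nonneg k)]

theorem differentiableAt_lambda_general (E k : ℝ) (hkE : 4 * E ^ 2 ≤ k) :
    ∀ w : ℂ, 1 ≤ ‖w‖ → ‖w‖ ≤ k / 2 →
      DifferentiableAt ℂ
        (fun w : ℂ =>
          ((k : ℂ) ^ 2 + 2 * ((k : ℂ) ^ 2 * (E : ℂ) ^ 2 / (((k : ℂ) + w) ^ 2 - (k : ℂ) ^ 2)))
            ^ ((1 : ℂ) / 2)) w := by
  intro w hw1 hw2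
  have hsmall := norm_two_mul_div_add_sq_sub_sq_lt hkE hw1 hw2
  have hden : ((k : ℂ) + w) ^ 2 - (k : ℂ) ^ 2 ≠ 0 :=
    norm_pos_iff.mp <| by linarith [three_mul_div_two_le_norm_add_sq_sub_sq hw1 hw2]
  have hslit : (k : ℂ) ^ 2 + 2 * ((k : ℂ) ^ 2 * (E : ℂ) ^ 2 / (((k : ℂ) + w) ^ 2 - (k : ℂ) ^ 2))
      ∈ slitPlane := by
    simpa using ofReal_add_mem_slitPlane hsmall
  have hinner : DifferentiableAt ℂ
      (fun w : ℂ => (k : ℂ) ^ 2 + 2 * ((k : ℂ) ^ 2 * (E : ℂ) ^ 2 / (((k : ℂ) + w) ^ 2 - (k : ℂ) ^ 2))) w := by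
    fun_prop (disch := exact hden)
  exact hinner.cpow (differentiableAt_const _) hslit

/-- For `k ≥ max{1, 4Ē²}` and `a(ζ) = k²Ē²/(ζ² − k²)`, the principal square root
`λ(w) = (k² + 2a(k+w))^{1/2}` is complex-differentiable at every `w` with `1 ≤ |w| ≤ k/2`. -/
theorem differentiableAt_lambda (E k : ℝ) (hk1 : 1 ≤ k) (hkE : 4 * E ^ 2 ≤ k) :
    ∀ w : ℂ, 1 ≤ ‖w‖ → ‖w‖ ≤ k / 2 →
      DifferentiableAt ℂ
        (fun w : ℂ =>
          ((k : ℂ) ^ 2 + 2 * ((k : ℂ) ^ 2 * (E : ℂ) ^ 2 / (((k : ℂ) + w) ^ 2 - (k : ℂ) ^ 2)))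
            ^ ((1 : ℂ) / 2)) w :=
  differentiableAt_lambda_general E k hkE
end

section
/- Let k, t, z, Ē be real numbers with k ≠ 0, and let r > 0. Define λ(ζ) = k + Ē²/(2(ζ − k)) for ζ ≠ k. Then (1/(2πi))·∮_{|ζ−k|=r} e^{i(tζ − z k λ(ζ))}/(ζ − k) dζ = e^{i(tk − zk²)}·∑_{n=0}^∞ (k Ē² t z/2)ⁿ/(n!)², where the contour is the positively oriented circle of radius r centred at k and the series converges absolutely. -/
/-!
With `w = ζ - k` the exponent splits as `i(tk - zk²) + a w + b / w`, where `a = it` and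
`b = -izkĒ²/2`. On the circle, `exp (a w) · exp (b / w) / w` is a double series of terms
`aⁿ bᵐ wⁿ⁻ᵐ⁻¹ / (n! m!)` dominated by a summable sequence of constants, so it can be integrated
termwise; only the terms with `n = m`, i.e. `w⁻¹`, contribute, each `2πi (ab)ⁿ / (n!)²`,
and `ab = kĒ²tz/2`.
-/

open Complex Metric Set

theorem hasSum_ite_diag_iff {α β : Type*} [AddCommMonoid α] [TopologicalSpace α] [DecidableEq β]
    {g : β → α} {a : α} :
    HasSum (fun p : β × β => if p.1 = p.2 then g p.1 else 0) a ↔ HasSum g a := by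
  refine (Function.Injective.hasSum_iff (g := fun n => (n, n))
    (fun _ _ h => congrArg Prod.fst h) ?_).symm.trans ?_
  · rintro ⟨n, m⟩ hnm
    exact if_neg fun h : n = m => hnm ⟨n, by rw [h]⟩
  · simp only [Function.comp_def, if_true]

theorem Complex.hasSum_exp_add (u v : ℂ) :
    HasSum (fun p : ℕ × ℕ => u ^ p.1 / p.1.factorial * (v ^ p.2 / p.2.factorial))
      (exp (u + v)) := by
  have hexp (x : ℂ) : HasSum (fun n : ℕ => x ^ n / n.factorial) (exp x) := by
    rw [exp_eq_exp_ℂ]; exact NormedSpace.expSeries_div_hasSum_exp x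
  have hsummable := summable_mul_of_summable_norm (f := fun n : ℕ => u ^ n / n.factorial)
    (g := fun n : ℕ => v ^ n / n.factorial)
    (NormedSpace.norm_expSeries_div_summable u) (NormedSpace.norm_expSeries_div_summable v)
  rw [Complex.exp_add]
  exact HasSum.mul (f := fun n : ℕ => u ^ n / n.factorial) (g := fun n : ℕ => v ^ n / n.factorial)
    (hexp u) (hexp v) hsummable

theorem Complex.summable_norm_pow_div_factorial_sq (x : ℂ) :
    Summable fun n : ℕ => ‖x ^ n / (n.factorial : ℂ) ^ 2‖ := by
  refine (Real.summable_pow_div_factorial ‖x‖).of_nonneg_of_le (fun n => norm_nonneg _) fun n => ?_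
  have hfac : (1 : ℝ) ≤ n.factorial := by exact_mod_cast n.factorial_pos
  rw [norm_div, norm_pow, norm_pow, norm_natCast]
  gcongr
  nlinarith

namespace circleIntegral

theorem integral_sub_center_zpow (c : ℂ) {R : ℝ} (hR : R ≠ 0) (n : ℤ) :
    (∮ z in C(c, R), (z - c) ^ n) = if n = -1 then 2 * Real.pi * I else 0 := by
  split_ifs with hn
  · simp [hn, integral_sub_center_inv c hR]
  · exact integral_sub_zpow_of_ne hn c c R

theorem hasSum_integral_of_norm_le {ι E : Type*} [Countable ι] [NormedAddCommGroup E]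
    [NormedSpace ℂ E] [CompleteSpace E] {F : ι → ℂ → E} {f : ℂ → E} {c : ℂ} {R : ℝ}
    (bound : ι → ℝ) (hF : ∀ i, ContinuousOn (F i) (sphere c |R|))
    (h_bound : ∀ i, ∀ z ∈ sphere c |R|, ‖F i z‖ ≤ bound i) (h_summable : Summable bound)
    (h_lim : ∀ z ∈ sphere c |R|, HasSum (fun i => F i z) (f z)) :
    HasSum (fun i => ∮ z in C(c, R), F i z) (∮ z in C(c, R), f z) := by
  refine intervalIntegral.hasSum_integral_of_dominated_convergence (fun i _ => |R| * bound i)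
    (fun i => ?_) (fun i => .of_forall fun θ _ => ?_) (.of_forall fun _ _ => h_summable.mul_left _)
    intervalIntegrable_const (.of_forall fun θ _ => ?_)
  · simp only [deriv_circleMap]
    exact (((continuous_circleMap 0 R).mul continuous_const).smul
      ((hF i).comp_continuous (continuous_circleMap c R)
        (circleMap_mem_sphere' c R))).aestronglyMeasurable
  · rw [norm_smul, deriv_circleMap, norm_mul, norm_circleMap_zero, norm_I, mul_one]
    exact mul_le_mul_of_nonneg_left (h_bound i _ (circleMap_mem_sphere' c R θ)) (abs_nonneg R)
  · exact (h_lim _ (circleMap_mem_sphere' c R θ)).const_smul _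

theorem integral_exp_add_div_series_term (c a b : ℂ) {R : ℝ} (hR : 0 < R) (n m : ℕ) :
    (∮ z in C(c, R), (a * (z - c)) ^ n / n.factorial * ((b / (z - c)) ^ m / m.factorial) *
        (z - c)⁻¹) =
      if n = m then 2 * Real.pi * I * ((a * b) ^ n / (n.factorial : ℂ) ^ 2) else 0 := by
  have hmonomial : EqOn
      (fun z => (a * (z - c)) ^ n / n.factorial * ((b / (z - c)) ^ m / m.factorial) * (z - c)⁻¹)
      (fun z => a ^ n * b ^ m / (n.factorial * m.factorial) * (z - c) ^ ((n : ℤ) - m - 1))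
      (sphere c R) := by
    intro z hz
    have hz : z - c ≠ 0 := sub_ne_zero.2 (ne_of_mem_sphere hz hR.ne')
    simp only [zpow_sub₀ hz, zpow_natCast, zpow_one, mul_pow, div_pow]
    field_simp
  rw [integral_congr hR.le hmonomial, integral_const_mul, integral_sub_center_zpow c hR.ne']
  have hresidue : (n : ℤ) - m - 1 = -1 ↔ n = m := by omega
  simp only [hresidue]
  split_ifs with hnm
  · subst hnm
    ring
  · ring

theorem integral_exp_add_div_sub_center (c a b : ℂ) {R : ℝ} (hR : 0 < R) :
    (∮ z in C(c, R), exp (a * (z - c) + b / (z - c)) / (z - c)) =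
      2 * Real.pi * I * ∑' n : ℕ, (a * b) ^ n / (n.factorial : ℂ) ^ 2 := by
  have hne : ∀ z ∈ sphere c |R|, z - c ≠ 0 := fun z hz =>
    sub_ne_zero.2 (ne_of_mem_sphere hz (abs_pos.2 hR.ne').ne')
  have hseries := hasSum_integral_of_norm_le
    (F := fun (p : ℕ × ℕ) z =>
      (a * (z - c)) ^ p.1 / p.1.factorial * ((b / (z - c)) ^ p.2 / p.2.factorial) * (z - c)⁻¹)
    (f := fun z => exp (a * (z - c) + b / (z - c)) / (z - c)) (c := c) (R := R)
    (fun p => (‖a‖ * |R|) ^ p.1 / p.1.factorial * ((‖b‖ / |R|) ^ p.2 / p.2.factorial) * |R|⁻¹)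
    (fun p => by fun_prop (disch := exact hne)) (fun p z hz => le_of_eq ?_) ?_ ?_
  · simp only [integral_exp_add_div_series_term c a b hR] at hseries
    rw [← (hasSum_ite_diag_iff (g := fun n : ℕ => 2 * Real.pi * I * ((a * b) ^ n /
      (n.factorial : ℂ) ^ 2))).1 hseries |>.tsum_eq, tsum_mul_left]
  · rw [mem_sphere_iff_norm] at hz
    simp [hz]
  · exact ((Real.summable_pow_div_factorial _).mul_of_nonneg (Real.summable_pow_div_factorial _)
      (fun n => by positivity) (fun n => by positivity)).mul_right _
  · intro z _
    rw [div_eq_mul_inv (exp _)]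
    exact (Complex.hasSum_exp_add _ _).mul_right _

end circleIntegral

theorem contour_integral_eq_besselI0_general (k t z E : ℝ) (r : ℝ) (hr : 0 < r) :
    (Summable fun n : ℕ =>
      ‖((((k * E ^ 2 * t * z / 2 : ℝ) : ℂ)) ^ n / ((n.factorial : ℂ) ^ 2))‖) ∧
    (1 / (2 * Real.pi * Complex.I)) *
        (∮ ζ in C((k : ℂ), r),
          Complex.exp (Complex.I * ((t : ℂ) * ζ -
            (z : ℂ) * (k : ℂ) * ((k : ℂ) + (E : ℂ) ^ 2 / (2 * (ζ - (k : ℂ)))))) / (ζ - (k : ℂ)))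
      = Complex.exp (Complex.I * ((t : ℂ) * (k : ℂ) - (z : ℂ) * (k : ℂ) ^ 2)) *
          ∑' n : ℕ, (((k * E ^ 2 * t * z / 2 : ℝ) : ℂ)) ^ n / ((n.factorial : ℂ) ^ 2) := by
  refine ⟨Complex.summable_norm_pow_div_factorial_sq _, ?_⟩
  have hproduct : I * t * -(I * z * k * E ^ 2 / 2) = ((k * E ^ 2 * t * z / 2 : ℝ) : ℂ) := by
    push_cast
    linear_combination -(t * z * k * E ^ 2 / 2 : ℂ) * I_sq
  have hintegrand : ∀ ζ : ℂ, exp (I * (t * ζ - z * k * (k + E ^ 2 / (2 * (ζ - k))))) / (ζ - k) =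
      exp (I * (t * k - z * k ^ 2)) *
        (exp (I * t * (ζ - k) + -(I * z * k * E ^ 2 / 2) / (ζ - k)) / (ζ - k)) := fun ζ => by
    rw [← mul_div_assoc, ← Complex.exp_add, ← div_div]
    congr 2
    ring
  simp only [hintegrand, circleIntegral.integral_const_mul,
    circleIntegral.integral_exp_add_div_sub_center _ _ _ hr, hproduct]
  field_simp

/-- Exact evaluation of the model contour integral: for real `k ≠ 0`, `t`, `z`, `Ē` and `r > 0`,
with `λ(ζ) = k + Ē²/(2(ζ−k))`,
`(1/2πi)·∮_{|ζ−k|=r} e^{i(tζ − zkλ(ζ))}/(ζ−k) dζ = e^{i(tk − zk²)}·∑ (kĒ²tz/2)ⁿ/(n!)²`,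
and the series converges absolutely. -/
theorem contour_integral_eq_besselI0 (k t z E : ℝ) (hk : k ≠ 0) (r : ℝ) (hr : 0 < r) :
    (Summable fun n : ℕ =>
      ‖((((k * E ^ 2 * t * z / 2 : ℝ) : ℂ)) ^ n / ((n.factorial : ℂ) ^ 2))‖) ∧
    (1 / (2 * Real.pi * Complex.I)) *
        (∮ ζ in C((k : ℂ), r),
          Complex.exp (Complex.I * ((t : ℂ) * ζ -
            (z : ℂ) * (k : ℂ) * ((k : ℂ) + (E : ℂ) ^ 2 / (2 * (ζ - (k : ℂ)))))) / (ζ - (k : ℂ)))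
      = Complex.exp (Complex.I * ((t : ℂ) * (k : ℂ) - (z : ℂ) * (k : ℂ) ^ 2)) *
          ∑' n : ℕ, (((k * E ^ 2 * t * z / 2 : ℝ) : ℂ)) ^ n / ((n.factorial : ℂ) ^ 2) :=
  contour_integral_eq_besselI0_general k t z E r hr
end

section
/- For every real ρ > 0, ∫₀^{2π} e^{ρ sin θ} dθ ≤ 3π + 2√π·e^{ρ}/√ρ. -/
/-!
On `[π, 2π]` the integrand is at most `1`. On `[0, π]` we have
`sin θ = cos (θ - π/2) ≤ 1 - (θ - π/2)² / 4`, so the integrand is at most `e^ρ` times the Gaussian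
`exp (-(ρ/4) (θ - π/2)²)`, whose integral over all of `ℝ` is `√(4π/ρ) = 2√π / √ρ`.
-/

open Real MeasureTheory intervalIntegral

lemma five_div_six_mul_abs_le_abs_sin {x : ℝ} (hx : |x| ≤ 1) : 5 / 6 * |x| ≤ |sin x| := by
  have hcube : |x| ^ 3 ≤ |x| := by
    nlinarith [abs_nonneg x, mul_le_one₀ hx (abs_nonneg x) hx]
  have := abs_sub_abs_le_abs_sub x (sin x)
  linarith [abs_sub_sin_le x]

lemma cos_le_one_sub_sq_div_four {u : ℝ} (hu : |u| ≤ 2) : cos u ≤ 1 - u ^ 2 / 4 := by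
  have hsin : 5 / 6 * |u / 2| ≤ |sin (u / 2)| :=
    five_div_six_mul_abs_le_abs_sin (by rw [abs_div, abs_two]; linarith)
  have hsq : (5 / 6 * |u / 2|) ^ 2 ≤ sin (u / 2) ^ 2 := by
    simpa only [sq_abs] using pow_le_pow_left₀ (by positivity) hsin 2
  have hcos : sin (u / 2) ^ 2 = 1 / 2 - cos u / 2 := by
    rw [sin_sq_eq_half_sub, mul_div_cancel₀ u two_ne_zero]
  rw [mul_pow, sq_abs, hcos] at hsq
  nlinarith [sq_nonneg u]

lemma sin_le_one_sub_sq_sub_pi_div_two_div_four {θ : ℝ} (hθ : |θ - π / 2| ≤ 2) :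
    sin θ ≤ 1 - (θ - π / 2) ^ 2 / 4 := by
  simpa only [cos_sub_pi_div_two] using cos_le_one_sub_sq_div_four hθ

lemma intervalIntegral_exp_neg_mul_sq_sub_le {b : ℝ} (hb : 0 < b) (c : ℝ) {s t : ℝ} (hst : s ≤ t) :
    ∫ x in s..t, exp (-b * (x - c) ^ 2) ≤ √(π / b) := by
  have hint : Integrable fun x : ℝ => exp (-b * (x - c) ^ 2) :=
    (integrable_exp_neg_mul_sq hb).comp_sub_right c
  calc ∫ x in s..t, exp (-b * (x - c) ^ 2)
      ≤ ∫ x, exp (-b * (x - c) ^ 2) := by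
        rw [integral_of_le hst]
        exact setIntegral_le_integral hint (.of_forall fun x => (exp_pos _).le)
    _ = √(π / b) := by
        rw [integral_sub_right_eq_self (fun x => exp (-b * x ^ 2)) c, integral_gaussian]

lemma integral_exp_mul_sin_pi_two_pi_le {ρ : ℝ} (hρ : 0 ≤ ρ) :
    ∫ θ in π..2 * π, exp (ρ * sin θ) ≤ π := by
  have hbound : ∀ θ ∈ Set.Icc π (2 * π), exp (ρ * sin θ) ≤ 1 := fun θ hθ => by
    have hsin : sin θ ≤ 0 := by
      rw [← sin_sub_two_pi]
      exact sin_nonpos_of_nonpos_of_neg_pi_le (by linarith [hθ.2]) (by linarith [hθ.1])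
    exact exp_le_one_iff.2 (mul_nonpos_of_nonneg_of_nonpos hρ hsin)
  calc ∫ θ in π..2 * π, exp (ρ * sin θ)
      ≤ ∫ _ in π..2 * π, (1 : ℝ) :=
        integral_mono_on (by linarith [pi_pos])
          ((by fun_prop : Continuous _).intervalIntegrable _ _) intervalIntegrable_const hbound
    _ = π := by rw [intervalIntegral.integral_const, smul_eq_mul, mul_one]; ring

lemma integral_exp_mul_sin_zero_pi_le {ρ : ℝ} (hρ : 0 < ρ) :
    ∫ θ in 0..π, exp (ρ * sin θ) ≤ exp ρ * √(π / (ρ / 4)) := by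
  have hbound : ∀ θ ∈ Set.Icc 0 π,
      exp (ρ * sin θ) ≤ exp ρ * exp (-(ρ / 4) * (θ - π / 2) ^ 2) := fun θ hθ => by
    have hsin := sin_le_one_sub_sq_sub_pi_div_two_div_four (θ := θ)
      (abs_le.2 ⟨by linarith [hθ.1, pi_le_four], by linarith [hθ.2, pi_le_four]⟩)
    rw [← exp_add, exp_le_exp]
    nlinarith [mul_le_mul_of_nonneg_left hsin hρ.le]
  calc ∫ θ in 0..π, exp (ρ * sin θ)
      ≤ ∫ θ in 0..π, exp ρ * exp (-(ρ / 4) * (θ - π / 2) ^ 2) :=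
        integral_mono_on pi_pos.le ((by fun_prop : Continuous _).intervalIntegrable _ _)
          ((by fun_prop : Continuous _).intervalIntegrable _ _) hbound
    _ = exp ρ * ∫ θ in 0..π, exp (-(ρ / 4) * (θ - π / 2) ^ 2) := integral_const_mul _ _
    _ ≤ exp ρ * √(π / (ρ / 4)) := by
        gcongr
        exact intervalIntegral_exp_neg_mul_sq_sub_le (by positivity) _ pi_pos.le

/-- For every real `ρ > 0`, `∫₀^{2π} e^{ρ sin θ} dθ ≤ 3π + 2√π·e^{ρ}/√ρ`. -/
theorem integral_exp_mul_sin_le (ρ : ℝ) (hρ : 0 < ρ) :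
    (∫ θ in (0:ℝ)..(2 * Real.pi), Real.exp (ρ * Real.sin θ))
      ≤ 3 * Real.pi + 2 * Real.sqrt Real.pi * Real.exp ρ / Real.sqrt ρ := by
  have hsqrt : √(π / (ρ / 4)) = 2 * √π / √ρ := by
    rw [div_div_eq_mul_div, mul_comm, sqrt_div' _ hρ.le, sqrt_mul zero_le_four,
      show (4 : ℝ) = 2 ^ 2 by norm_num, sqrt_sq zero_le_two]
  have hcont : Continuous fun θ => exp (ρ * sin θ) := by fun_prop
  rw [← integral_add_adjacent_intervals (b := π) (hcont.intervalIntegrable _ _)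
    (hcont.intervalIntegrable _ _)]
  have hleft := integral_exp_mul_sin_zero_pi_le hρ
  have hright := integral_exp_mul_sin_pi_two_pi_le hρ.le
  rw [hsqrt] at hleft
  have hπ := pi_pos
  calc _ ≤ exp ρ * (2 * √π / √ρ) + π := add_le_add hleft hright
    _ ≤ 3 * π + 2 * √π * exp ρ / √ρ := by rw [mul_div_assoc', mul_comm (exp ρ)]; linarith
end

section
/- For every real ρ ≥ 1, ∫₀^{2π} e^{ρ sin θ} dθ ≥ e^{ρ}/√ρ. -/
open Real intervalIntegral

/-- For every real `ρ ≥ 1`, `∫₀^{2π} e^{ρ sin θ} dθ ≥ e^{ρ}/√ρ`. -/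
theorem integral_exp_mul_sin_ge (ρ : ℝ) (hρ : 1 ≤ ρ) :
    Real.exp ρ / Real.sqrt ρ ≤ ∫ θ in (0:ℝ)..(2 * Real.pi), Real.exp (ρ * Real.sin θ) := by
  have hρ0 : (0:ℝ) < ρ := lt_of_lt_of_le one_pos hρ
  set s := Real.sqrt ρ with hs
  have hs1 : 1 ≤ s := by
    rw [hs, show (1:ℝ) = Real.sqrt 1 by simp]
    exact Real.sqrt_le_sqrt hρ
  have hs0 : (0:ℝ) < s := lt_of_lt_of_le one_pos hs1
  have hssq : s ^ 2 = ρ := Real.sq_sqrt hρ0.le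
  set δ := s⁻¹ with hδdef
  have hδ0 : (0:ℝ) < δ := inv_pos.mpr hs0
  have hδ1 : δ ≤ 1 := by
    rw [hδdef]
    exact inv_le_one_of_one_le₀ hs1
  have hδsq : ρ * δ ^ 2 = 1 := by
    rw [hδdef, inv_pow, ← hssq]
    field_simp
  have hπ : (3:ℝ) < Real.pi := Real.pi_gt_three
  set a := Real.pi / 2 - δ with ha
  set b := Real.pi / 2 + δ with hb
  have ha0 : 0 ≤ a := by rw [ha]; nlinarith
  have hb2π : b ≤ 2 * Real.pi := by rw [hb]; nlinarith
  have hab : a ≤ b := by rw [ha, hb]; linarith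
  have hcont : Continuous fun θ : ℝ => Real.exp (ρ * Real.sin θ) := by continuity
  have hint : ∀ u v : ℝ, IntervalIntegrable (fun θ => Real.exp (ρ * Real.sin θ))
      MeasureTheory.volume u v := fun u v => hcont.intervalIntegrable u v
  -- split the integral
  have hsplit : (∫ θ in (0:ℝ)..a, Real.exp (ρ * Real.sin θ))
      + (∫ θ in a..b, Real.exp (ρ * Real.sin θ))
      + (∫ θ in b..(2 * Real.pi), Real.exp (ρ * Real.sin θ))
      = ∫ θ in (0:ℝ)..(2 * Real.pi), Real.exp (ρ * Real.sin θ) := by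
    rw [integral_add_adjacent_intervals (hint 0 a) (hint a b),
      integral_add_adjacent_intervals (hint 0 b) (hint b (2 * Real.pi))]
  have hnonneg1 : 0 ≤ ∫ θ in (0:ℝ)..a, Real.exp (ρ * Real.sin θ) :=
    intervalIntegral.integral_nonneg ha0 (fun x _ => (Real.exp_pos _).le)
  have hnonneg2 : 0 ≤ ∫ θ in b..(2 * Real.pi), Real.exp (ρ * Real.sin θ) :=
    intervalIntegral.integral_nonneg hb2π (fun x _ => (Real.exp_pos _).le)
  -- main bound on the middle interval
  have hmid : (b - a) * Real.exp (ρ - 1/2) ≤ ∫ θ in a..b, Real.exp (ρ * Real.sin θ) := by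
    have := intervalIntegral.integral_mono_on hab
      (_root_.intervalIntegrable_const (c := Real.exp (ρ - 1/2))) (hint a b) ?_
    · simpa using this
    · intro θ hθ
      rw [Set.mem_Icc] at hθ
      apply Real.exp_le_exp.mpr
      have hsin : Real.sin θ = Real.cos (θ - Real.pi / 2) := by
        rw [Real.cos_sub]; simp
      have hcb : 1 - (θ - Real.pi/2) ^ 2 / 2 ≤ Real.cos (θ - Real.pi / 2) :=
        Real.one_sub_sq_div_two_le_cos
      have hθδ : (θ - Real.pi/2) ^ 2 ≤ δ ^ 2 := by
        have h1 : -δ ≤ θ - Real.pi/2 := by rw [ha] at hθ; linarith [hθ.1]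
        have h2 : θ - Real.pi/2 ≤ δ := by rw [hb] at hθ; linarith [hθ.2]
        nlinarith
      have hsinlb : 1 - δ ^ 2 / 2 ≤ Real.sin θ := by
        rw [hsin]; nlinarith
      nlinarith
  -- arithmetic: (b - a) * e^{ρ - 1/2} = 2δ e^ρ e^{-1/2} ≥ δ e^ρ = e^ρ / s
  have hba : b - a = 2 * δ := by rw [ha, hb]; ring
  have hexp : Real.exp ρ / s ≤ (b - a) * Real.exp (ρ - 1/2) := by
    rw [hba, Real.exp_sub, div_eq_mul_inv, ← hδdef, div_eq_mul_inv]
    have hepos := Real.exp_pos (1/2 : ℝ)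
    have he : Real.exp (1/2 : ℝ) ≤ 2 := by
      have h2 : Real.exp (1/2 : ℝ) ^ 2 = Real.exp 1 := by
        rw [← Real.exp_nat_mul]; norm_num
      have h4 : Real.exp (1/2 : ℝ) ^ 2 ≤ 2 ^ 2 := by
        rw [h2]; norm_num
        linarith [Real.exp_one_lt_d9]
      exact (pow_le_pow_iff_left₀ hepos.le (by norm_num) (by norm_num)).mp h4
    have hy : Real.exp (1/2 : ℝ) * (Real.exp (1/2 : ℝ))⁻¹ = 1 :=
      mul_inv_cancel₀ hepos.ne'
    have h2y : (1:ℝ) ≤ 2 * (Real.exp (1/2 : ℝ))⁻¹ := by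
      have h := mul_le_mul_of_nonneg_right he (inv_pos.mpr hepos).le
      rw [hy] at h; exact h
    calc Real.exp ρ * δ = (δ * Real.exp ρ) * 1 := by ring
      _ ≤ (δ * Real.exp ρ) * (2 * (Real.exp (1/2 : ℝ))⁻¹) :=
        mul_le_mul_of_nonneg_left h2y (mul_nonneg hδ0.le (Real.exp_pos ρ).le)
      _ = 2 * δ * (Real.exp ρ * (Real.exp (1/2 : ℝ))⁻¹) := by ring
  calc Real.exp ρ / s ≤ (b - a) * Real.exp (ρ - 1/2) := hexp
    _ ≤ ∫ θ in a..b, Real.exp (ρ * Real.sin θ) := hmid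
    _ ≤ _ := by rw [← hsplit]; linarith
end

section
/- There exists a real constant c₀ > 0 such that for every natural number n, ∑_{m=0}^{n} (c₀/(m²+1))·(c₀/((n−m)²+1)) ≤ c₀/(n²+1). Equivalently, the power series φ(x) = c₀·∑_{n=0}^∞ xⁿ/(n²+1) satisfies, coefficient by coefficient, φ² ≪ φ (each coefficient of the Cauchy product φ·φ is at most the corresponding coefficient of φ). -/
/-!
With `w n = 1 / (n² + 1)`, the inequality `(i + j)² + 1 ≤ 2 ((i² + 1) + (j² + 1))` reads
`w i * w j ≤ 2 w (i + j) (w i + w j)`. Summing over `i + j = n` bounds the `n`-th coefficient of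
`w * w` by `4 S w n`, where `S = ∑ w`, and then `c₀ = 1 / (4 S)` absorbs the constant.
-/

open Finset

theorem inv_sq_add_one_mul_inv_sq_add_one_le (a b : ℝ) :
    (a ^ 2 + 1)⁻¹ * (b ^ 2 + 1)⁻¹ ≤
      2 * ((a + b) ^ 2 + 1)⁻¹ * ((a ^ 2 + 1)⁻¹ + (b ^ 2 + 1)⁻¹) := by
  have key : (a + b) ^ 2 + 1 ≤ 2 * ((a ^ 2 + 1) + (b ^ 2 + 1)) := by
    nlinarith [sq_nonneg (a - b)]
  rw [inv_add_inv (by positivity) (by positivity)]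
  field_simp
  nlinarith [mul_le_mul_of_nonneg_left key (by positivity : (0 : ℝ) ≤ (a ^ 2 + 1) * (b ^ 2 + 1))]

theorem summable_inv_sq_add_one : Summable fun n : ℕ => ((n : ℝ) ^ 2 + 1)⁻¹ := by
  refine (Real.summable_nat_pow_inv.2 one_lt_two).of_norm_bounded_eventually_nat ?_
  filter_upwards [Filter.eventually_ne_atTop 0] with n hn
  rw [Real.norm_of_nonneg (by positivity)]
  gcongr
  linarith

theorem sum_antidiagonal_mul_le_of_mul_le {w : ℕ → ℝ} {K : ℝ}
    (h : ∀ i j, w i * w j ≤ K * w (i + j) * (w i + w j)) (n : ℕ) :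
    ∑ p ∈ antidiagonal n, w p.1 * w p.2 ≤ 2 * K * w n * ∑ k ∈ range (n + 1), w k := by
  calc ∑ p ∈ antidiagonal n, w p.1 * w p.2
      ≤ ∑ p ∈ antidiagonal n, K * w n * (w p.1 + w p.2) :=
        sum_le_sum fun p hp => mem_antidiagonal.1 hp ▸ h p.1 p.2
    _ = K * w n * (∑ p ∈ antidiagonal n, w p.1 + ∑ p ∈ antidiagonal n, w p.swap.1) := by
        rw [← mul_sum, sum_add_distrib]; rfl
    _ = 2 * K * w n * ∑ k ∈ range (n + 1), w k := by
        rw [Nat.sum_antidiagonal_swap (f := fun p => w p.1),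
          Nat.sum_antidiagonal_eq_sum_range_succ_mk]
        ring

theorem sum_antidiagonal_inv_sq_add_one_le (n : ℕ) :
    ∑ p ∈ antidiagonal n, ((p.1 : ℝ) ^ 2 + 1)⁻¹ * ((p.2 : ℝ) ^ 2 + 1)⁻¹ ≤
      4 * (∑' k : ℕ, ((k : ℝ) ^ 2 + 1)⁻¹) * ((n : ℝ) ^ 2 + 1)⁻¹ := by
  set w : ℕ → ℝ := fun k => ((k : ℝ) ^ 2 + 1)⁻¹
  have hmul : ∀ i j, w i * w j ≤ 2 * w (i + j) * (w i + w j) := fun i j => by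
    simpa only [w, Nat.cast_add] using inv_sq_add_one_mul_inv_sq_add_one_le i j
  have hpartial : ∑ k ∈ range (n + 1), w k ≤ ∑' k, w k :=
    summable_inv_sq_add_one.sum_le_tsum _ fun k _ => by positivity
  calc ∑ p ∈ antidiagonal n, w p.1 * w p.2
      ≤ 2 * 2 * w n * ∑ k ∈ range (n + 1), w k := sum_antidiagonal_mul_le_of_mul_le hmul n
    _ = 4 * (∑ k ∈ range (n + 1), w k) * w n := by ring
    _ ≤ 4 * (∑' k, w k) * w n := by gcongr

theorem exists_pos_sum_antidiagonal_mul_le {w : ℕ → ℝ} {C : ℝ} (hC : 0 < C)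
    (h : ∀ n, ∑ p ∈ antidiagonal n, w p.1 * w p.2 ≤ C * w n) :
    ∃ c > 0, ∀ n, ∑ p ∈ antidiagonal n, c * w p.1 * (c * w p.2) ≤ c * w n := by
  refine ⟨C⁻¹, inv_pos.2 hC, fun n => ?_⟩
  calc ∑ p ∈ antidiagonal n, C⁻¹ * w p.1 * (C⁻¹ * w p.2)
      = C⁻¹ * C⁻¹ * ∑ p ∈ antidiagonal n, w p.1 * w p.2 := by
        rw [mul_sum]; exact sum_congr rfl fun _ _ => by ring
    _ ≤ C⁻¹ * C⁻¹ * (C * w n) := by gcongr; exact h n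
    _ = C⁻¹ * w n := by field_simp

/-- There exists `c₀ > 0` such that for every natural number `n`,
`∑_{m=0}^{n} (c₀/(m²+1))·(c₀/((n−m)²+1)) ≤ c₀/(n²+1)`; i.e. coefficientwise `φ² ≪ φ`
for the majorant series `φ(x) = c₀ ∑ xⁿ/(n²+1)`. -/
theorem exists_majorant_series_sq_le :
    ∃ c₀ : ℝ, 0 < c₀ ∧ ∀ n : ℕ,
      ∑ m ∈ Finset.range (n + 1),
        (c₀ / ((m : ℝ) ^ 2 + 1)) * (c₀ / (((n - m : ℕ) : ℝ) ^ 2 + 1))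
        ≤ c₀ / ((n : ℝ) ^ 2 + 1) := by
  have hS : 0 < ∑' k : ℕ, ((k : ℝ) ^ 2 + 1)⁻¹ :=
    summable_inv_sq_add_one.tsum_pos (fun k => by positivity) 0 (by norm_num)
  obtain ⟨c, hc, hle⟩ := exists_pos_sum_antidiagonal_mul_le
    (w := fun k => ((k : ℝ) ^ 2 + 1)⁻¹) (by positivity) sum_antidiagonal_inv_sq_add_one_le
  refine ⟨c, hc, fun n => ?_⟩
  simpa only [div_eq_mul_inv, Nat.sum_antidiagonal_eq_sum_range_succ
    (fun i j => c * ((i : ℝ) ^ 2 + 1)⁻¹ * (c * ((j : ℝ) ^ 2 + 1)⁻¹))] using hle n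
end
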